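/- arXiv:1306.2545 — 3 statements merged into one kernel-verified Lean document; each statement's English description precedes it below -/
import Mathlib

section
/- For m, n ≥ 0, the set Fun_Λ(𝒬^m, 𝒬^n) of Λ-functors from 𝒬^m to 𝒬^n is in bijection with the set of nondecreasing functions F : ℤ → ℤ satisfying F(x + m + 1) = F(x) + (n + 1) for all x ∈ ℤ, taken modulo the equivalence relation F ∼ F + (n + 1). The bijection sends the class of F to the Λ-functor which maps the vertex i mod (m+1) to F(i) mod (n+1) and maps the generating arrow i → i+1 to the unique path in 𝒬^n from F(i) mod (n+1) to F(i+1) mod (n+1) of length F(i+1) − F(i). Moreover, these bijections are compatible with composition: composition of Λ-functors corresponds to composition of representing functions ℤ → ℤ. (This identifies Fun_Λ(𝒬^m, 𝒬^n) with the Hom-set Hom_Λ(⟨m⟩, ⟨n⟩) of Connes' cyclic category in its standard combinatorial model, so that ⟨n⟩ ↦ 𝒬^n is a fully faithful embedding of the cyclic category into Λ-categories.) -/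
open CategoryTheory

abbrev CircVert (n : ℕ) := ZMod (n + 1)

instance circQuiver (n : ℕ) : Quiver (CircVert n) :=
  ⟨fun i j => PLift (j = i + 1)⟩

/-- The object of the path category `𝒬ⁿ` corresponding to a vertex. -/
abbrev vtx {n : ℕ} (i : CircVert n) : Paths (CircVert n) := i

/-- Length of a morphism in a path category. -/
def plen {V : Type*} [Quiver V] {a b : Paths V} (p : a ⟶ b) : ℕ :=
  Quiver.Path.length p

/-- The path of length `k` starting at `i` going around the circle. -/
def arc (n : ℕ) (i : CircVert n) : (k : ℕ) → Quiver.Path i (i + (k : ZMod (n + 1)))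
  | 0 => Quiver.Path.cast rfl (by simp) Quiver.Path.nil
  | k + 1 => (arc n i k).cons ⟨by push_cast; ring⟩

/-- The full-cycle endomorphism `w_i` of the vertex `i` in `𝒬ⁿ`. -/
def cycleW (n : ℕ) (i : CircVert n) : vtx i ⟶ vtx i :=
  Quiver.Path.cast rfl (by simp) (arc n i (n + 1))

/-- The shortest path `φ_{ij}` from `i` to `j` (the identity if `i = j`). -/
def shortPath (n : ℕ) (i j : CircVert n) : vtx i ⟶ vtx j :=
  Quiver.Path.cast rfl (by rw [ZMod.natCast_rightInverse (j - i)]; ring) (arc n i (j - i).val)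

/-- The generating arrow `i ⟶ i+1` of `𝒬ⁿ`. -/
def genHom (n : ℕ) (i : CircVert n) : vtx i ⟶ vtx (i + 1) :=
  Quiver.Hom.toPath ⟨rfl⟩

/-- Iteration (monoid power) of an endomorphism. -/
def endPow {C : Type*} [Category C] {X : C} (f : CategoryTheory.End X) (t : ℕ) :
    CategoryTheory.End X := f ^ t


/-- A `Λ`-functor between the path categories of circular quivers: a functor sending the
full-cycle endomorphism at each vertex to the full-cycle endomorphism at its image. -/
def IsCycFunctor {m n : ℕ} (F : Paths (CircVert m) ⥤ Paths (CircVert n)) : Prop :=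
  ∀ i : CircVert m, F.map (cycleW m i) = cycleW n (F.obj (vtx i))

/-- A representative of a morphism `⟨m⟩ → ⟨n⟩` of the cyclic category: a nondecreasing function
`F : ℤ → ℤ` satisfying `F(x + m + 1) = F(x) + (n + 1)`. -/
def CycRep (m n : ℕ) : Type :=
  {F : ℤ → ℤ // Monotone F ∧ ∀ x : ℤ, F (x + (m + 1 : ℤ)) = F x + (n + 1 : ℤ)}

/-- The equivalence relation `F ∼ F + (n + 1)` on representatives. -/
def cycSetoid (m n : ℕ) : Setoid (CycRep m n) where
  r F G := ∃ k : ℤ, ∀ x : ℤ, G.val x = F.val x + k * (n + 1 : ℤ)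
  iseqv := by
    constructor
    · exact fun F => ⟨0, by simp⟩
    · rintro F G ⟨k, h⟩; exact ⟨-k, fun x => by rw [h x]; ring⟩
    · rintro F G H ⟨k, h⟩ ⟨l, h'⟩; exact ⟨k + l, fun x => by rw [h' x, h x]; ring⟩

/-- Composition of representing functions. -/
def CycRep.comp {p m n : ℕ} (F : CycRep m n) (G : CycRep p m) : CycRep p n :=
  ⟨F.val ∘ G.val, F.prop.1.comp G.prop.1, fun x => by
    simp only [Function.comp_apply]
    rw [G.prop.2 x, F.prop.2 (G.val x)]⟩

/-- The generating arrow of `𝒬^m` from `x mod (m+1)` to `(x+1) mod (m+1)`, for `x : ℤ`. -/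
def genHomZ (m : ℕ) (x : ℤ) : vtx ((x : ZMod (m + 1))) ⟶ vtx (((x + 1 : ℤ) : ZMod (m + 1))) :=
  Quiver.Hom.toPath ⟨by push_cast; ring⟩

/-!
In `𝒬ⁿ` the target of a path of length `k` from `i` is `i + k`, and a path is determined by its
endpoints and its length. Hence a functor `Φ : 𝒬ᵐ → 𝒬ⁿ` is determined by the image of the
vertex `0` and by the lengths `ℓ(x)` of the images of the generating arrows `x → x + 1`. Lifting
the image of `0` to an integer and summing up the lengths gives `F : ℤ → ℤ` with
`F(x + 1) = F(x) + ℓ(x)`; it is nondecreasing, and the image of a full cycle of `𝒬ᵐ` has length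
`F(x + m + 1) - F(x)`, so the `Λ`-condition says exactly `F(x + m + 1) = F(x) + n + 1`. The only
choice is that of the lift, i.e. `F` up to `F + k (n + 1)`. Since lengths add along paths, the
functor of `F` sends a path of length `k` from `x` to a path of length `F(x + k) - F(x)`;
applied to the images of generators under a second functor, this gives compatibility with
composition.
-/

theorem Function.Periodic.eq_of_intCast_eq {α : Type*} {f : ℤ → α} {c : ℕ}
    (hf : Function.Periodic f c) {x y : ℤ} (h : (x : ZMod c) = y) : f x = f y := by
  obtain ⟨k, hk⟩ := (ZMod.intCast_eq_intCast_iff_dvd_sub x y c).mp h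
  rw [show y = x + k * c by linear_combination hk]
  exact (hf.int_mul k x).symm

theorem Int.exists_add_one_eq_add {G : Type*} [AddGroup G] (ℓ : ℤ → G) (c : G) :
    ∃ F : ℤ → G, F 0 = c ∧ ∀ x, F (x + 1) = F x + ℓ x := by
  refine ⟨fun x => Int.inductionOn' (motive := fun _ => G) x 0 c (fun k _ v => v + ℓ k)
    (fun k _ v => v - ℓ (k - 1)), Int.inductionOn'_self, fun x => ?_⟩
  rcases le_or_gt 0 x with hx | hx
  · exact Int.inductionOn'_add_one hx
  · have h := Int.inductionOn'_sub_one (motive := fun _ => G) (zero := c)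
      (succ := fun k _ v => v + ℓ k) (pred := fun k _ v => v - ℓ (k - 1))
      (show x + 1 ≤ 0 by omega)
    simp only [add_sub_cancel_right] at h
    beta_reduce
    rw [h, sub_add_cancel]

theorem Quiver.Path.length_cast {U : Type*} [Quiver U] {u v u' v' : U} (hu : u = u')
    (hv : v = v') (p : Quiver.Path u v) : (p.cast hu hv).length = p.length := by
  subst hu hv
  rfl

section plen

variable {V : Type*} [Quiver V] {a b c : Paths V}

@[simp]
theorem plen_id : plen (𝟙 a) = 0 :=
  rfl

@[simp]
theorem plen_comp (p : a ⟶ b) (q : b ⟶ c) : plen (p ≫ q) = plen p + plen q :=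
  Quiver.Path.length_comp p q

@[simp]
theorem plen_eqToHom (h : a = b) : plen (eqToHom h) = 0 := by
  subst h
  rfl

end plen

namespace CircVert

section Paths

variable {n : ℕ}

theorem eq_add_length {a b : CircVert n} (p : Quiver.Path a b) : b = a + p.length := by
  induction p with
  | nil => simp
  | cons p e ih =>
    obtain ⟨rfl⟩ := e
    rw [Quiver.Path.length_cons]
    push_cast
    linear_combination ih

theorem path_eq_of_length_eq {a b : CircVert n} (p q : Quiver.Path a b)
    (h : p.length = q.length) : p = q := by
  induction p with
  | nil => exact (Quiver.Path.eq_nil_of_length_zero q h.symm).symm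
  | cons p e ih =>
    cases q with
    | nil => simp at h
    | cons q f =>
      obtain ⟨he⟩ := e
      obtain ⟨hf⟩ := f
      obtain rfl := add_right_cancel (he.symm.trans hf)
      rw [ih q (by simpa using h)]

theorem hom_eq_of_plen_eq {a b a' b' : Paths (CircVert n)} (ha : a = a') (hb : b = b')
    (p : a ⟶ b) (q : a' ⟶ b') (h : plen p = plen q) :
    p = eqToHom ha ≫ q ≫ eqToHom hb.symm := by
  subst ha hb
  simpa using path_eq_of_length_eq p q h

theorem length_arc (i : CircVert n) (k : ℕ) : (arc n i k).length = k := by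
  induction k with
  | zero => simp [arc, Quiver.Path.length_cast]
  | succ k ih => simp [arc, ih]

theorem plen_cycleW (i : CircVert n) : plen (cycleW n i) = n + 1 := by
  simp [cycleW, plen, Quiver.Path.length_cast, length_arc]

end Paths

section Functors

variable {m n : ℕ} (Φ : Paths (CircVert m) ⥤ Paths (CircVert n))

theorem plen_map_genHomZ (x : ℤ) :
    plen (Φ.map (genHomZ m x)) = plen (Φ.map (genHom m x)) := by
  have h : (x : CircVert m) + 1 = ((x + 1 : ℤ) : CircVert m) := by push_cast; rfl
  rw [hom_eq_of_plen_eq rfl (congrArg vtx h.symm) (genHomZ m x) (genHom m x) rfl]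
  simp [eqToHom_map]

theorem functor_ext_of_plen {Ψ : Paths (CircVert m) ⥤ Paths (CircVert n)}
    (h₀ : Φ.obj (vtx 0) = Ψ.obj (vtx 0))
    (h : ∀ i, plen (Φ.map (genHom m i)) = plen (Ψ.map (genHom m i))) : Φ = Ψ := by
  have hobj : ∀ k : ℕ, Φ.obj (vtx (k : CircVert m)) = Ψ.obj (vtx k) := by
    intro k
    induction k with
    | zero => simpa using h₀
    | succ k ih =>
      have hk := h k
      unfold plen at hk
      rw [Nat.cast_succ, eq_add_length (Φ.map (genHom m k)), eq_add_length (Ψ.map (genHom m k)),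
        hk]
      congr 1
  have h_obj : Φ.obj = Ψ.obj := funext fun (i : CircVert m) => by simpa using hobj i.val
  refine Paths.ext_functor h_obj fun a b e => ?_
  obtain ⟨rfl⟩ := e
  exact hom_eq_of_plen_eq (congr_fun h_obj _) (congr_fun h_obj _) (Φ.map (genHom m a)) _ (h a)

theorem plen_map_eq_sub (f : ℤ → ℤ)
    (hf : ∀ y : ℤ, (plen (Φ.map (genHom m y)) : ℤ) = f (y + 1) - f y)
    {x : ℤ} {a b : CircVert m} (ha : a = x) (p : Quiver.Path a b) :
    (plen (Φ.map (X := vtx a) (Y := vtx b) p) : ℤ) = f (x + p.length) - f x := by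
  subst ha
  induction p with
  | nil =>
    change ((plen (Φ.map (𝟙 (vtx (x : CircVert m)))) : ℕ) : ℤ) = f (x + 0) - f x
    simp
  | @cons b' c p e ih =>
    obtain ⟨rfl⟩ := e
    have hb : b' = ((x + p.length : ℤ) : CircVert m) :=
      (eq_add_length p).trans (by push_cast; rfl)
    have hstep := hf (x + p.length)
    rw [← hb] at hstep
    change ((plen (Φ.map ((show vtx (x : CircVert m) ⟶ vtx b' from p) ≫ genHom m b')) : ℕ)
      : ℤ) = _
    rw [Functor.map_comp, plen_comp, Nat.cast_add, ih, hstep, Quiver.Path.length_cons]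
    push_cast
    rw [← add_assoc]
    ring

theorem plen_map_cycleW_eq_sub (f : ℤ → ℤ)
    (hf : ∀ y : ℤ, (plen (Φ.map (genHom m y)) : ℤ) = f (y + 1) - f y) (x : ℤ) :
    (plen (Φ.map (cycleW m x)) : ℤ) = f (x + (m + 1 : ℤ)) - f x := by
  have hm : (cycleW m (x : CircVert m)).length = m + 1 := plen_cycleW _
  rw [plen_map_eq_sub Φ f hf rfl (cycleW m x), hm]
  push_cast
  rfl

end Functors

end CircVert

namespace CycRep

section Functor

variable {m n : ℕ} (F : CycRep m n)

theorem sub_nonneg_succ (x : ℤ) : 0 ≤ F.val (x + 1) - F.val x :=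
  sub_nonneg.mpr (F.prop.1 (Int.le_add_one le_rfl))

theorem intCast_apply_eq {x y : ℤ} (h : (x : CircVert m) = y) :
    (F.val x : CircVert n) = F.val y := by
  refine Function.Periodic.eq_of_intCast_eq (c := m + 1) (f := fun x => (F.val x : CircVert n))
    (fun x => ?_) h
  simp only
  push_cast [Nat.cast_succ, F.prop.2]
  rw [ZMod.natCast_self', add_zero]

theorem apply_succ_sub_eq {x y : ℤ} (h : (x : CircVert m) = y) :
    F.val (x + 1) - F.val x = F.val (y + 1) - F.val y := by
  refine Function.Periodic.eq_of_intCast_eq (c := m + 1) (f := fun x => F.val (x + 1) - F.val x)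
    (fun x => ?_) h
  push_cast
  rw [add_right_comm, F.prop.2, F.prop.2]
  ring

theorem intCast_add_toNat_sub {i j : CircVert m} (e : i ⟶ j) :
    (F.val i.val : CircVert n) + ((F.val (i.val + 1) - F.val i.val).toNat : CircVert n)
      = F.val j.val := by
  obtain ⟨rfl⟩ := e
  rw [← Int.cast_natCast (R := CircVert n), Int.toNat_of_nonneg (F.sub_nonneg_succ _),
    ← Int.cast_add, add_sub_cancel]
  exact F.intCast_apply_eq (by simp)

def toFunctor : Paths (CircVert m) ⥤ Paths (CircVert n) :=
  Paths.lift
    { obj := fun i => vtx (F.val i.val : CircVert n)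
      map := fun {i _} e => (arc n _ (F.val (i.val + 1) - F.val i.val).toNat).cast rfl
        (F.intCast_add_toNat_sub e) }

theorem toFunctor_obj (x : ℤ) :
    F.toFunctor.obj (vtx (x : CircVert m)) = vtx (F.val x : CircVert n) :=
  congrArg vtx (F.intCast_apply_eq (by simp))

theorem plen_toFunctor_map_toPath {i j : CircVert m} (e : i ⟶ j) :
    plen (F.toFunctor.map e.toPath) = (F.val (i.val + 1) - F.val i.val).toNat := by
  rw [toFunctor, Paths.lift_toPath]
  exact (Quiver.Path.length_cast rfl (F.intCast_add_toNat_sub e) _).trans (CircVert.length_arc _ _)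

theorem plen_toFunctor_map_genHom (x : ℤ) :
    (plen (F.toFunctor.map (genHom m x)) : ℤ) = F.val (x + 1) - F.val x := by
  rw [genHom, plen_toFunctor_map_toPath, Int.toNat_of_nonneg (F.sub_nonneg_succ _)]
  exact F.apply_succ_sub_eq (by simp)

theorem isCycFunctor_toFunctor : IsCycFunctor F.toFunctor := by
  intro i
  obtain ⟨x, rfl⟩ := ZMod.intCast_surjective i
  have h := CircVert.plen_map_cycleW_eq_sub F.toFunctor F.val F.plen_toFunctor_map_genHom x
  have hn : plen (cycleW n (F.toFunctor.obj (vtx x))) = n + 1 := CircVert.plen_cycleW _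
  rw [F.prop.2] at h
  apply CircVert.path_eq_of_length_eq
  change plen _ = plen _
  rw [hn]
  omega

end Functor

variable {m n : ℕ}

theorem toFunctor_eq_of_rel {F G : CycRep m n} (h : (cycSetoid m n).r F G) :
    F.toFunctor = G.toFunctor := by
  obtain ⟨k, hk⟩ := h
  refine CircVert.functor_ext_of_plen _ ?_ fun i => ?_
  · rw [← Int.cast_zero, toFunctor_obj, toFunctor_obj, hk]
    push_cast
    rw [ZMod.natCast_self', mul_zero, add_zero]
  · obtain ⟨x, rfl⟩ := ZMod.intCast_surjective i
    have hF := F.plen_toFunctor_map_genHom x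
    have hG := G.plen_toFunctor_map_genHom x
    rw [hk, hk] at hG
    omega

theorem rel_of_toFunctor_eq {F G : CycRep m n} (h : F.toFunctor = G.toFunctor) :
    (cycSetoid m n).r F G := by
  have hlen : ∀ x : ℤ, F.val (x + 1) - F.val x = G.val (x + 1) - G.val x := fun x => by
    rw [← F.plen_toFunctor_map_genHom, ← G.plen_toFunctor_map_genHom, h]
  have h₀ : (F.val 0 : CircVert n) = G.val 0 := by
    have := congrArg (fun Φ => Φ.obj (vtx ((0 : ℤ) : CircVert m))) h
    rw [toFunctor_obj, toFunctor_obj] at this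
    exact this
  obtain ⟨k, hk⟩ := (ZMod.intCast_eq_intCast_iff_dvd_sub _ _ _).mp h₀
  have hper : Function.Periodic (fun x => G.val x - F.val x) 1 := fun x => by
    simp only
    linarith [hlen x]
  refine ⟨k, fun x => ?_⟩
  have := hper.int_mul_eq x
  simp only [Int.cast_id, mul_one] at this
  push_cast at hk
  linarith

theorem toFunctor_comp {p : ℕ} (F : CycRep m n) (G : CycRep p m) :
    (F.comp G).toFunctor = G.toFunctor ⋙ F.toFunctor := by
  refine CircVert.functor_ext_of_plen _ ?_ fun i => ?_
  · rw [← Int.cast_zero, Functor.comp_obj, toFunctor_obj, toFunctor_obj, toFunctor_obj]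
    rfl
  · obtain ⟨x, rfl⟩ := ZMod.intCast_surjective i
    have hG := G.plen_toFunctor_map_genHom x
    have hF := CircVert.plen_map_eq_sub F.toFunctor F.val F.plen_toFunctor_map_genHom
      (G.toFunctor_obj x) (G.toFunctor.map (genHom p x))
    have hFG := (F.comp G).plen_toFunctor_map_genHom x
    unfold plen at hF hG hFG ⊢
    rw [hG, add_sub_cancel] at hF
    zify
    rw [hFG, Functor.comp_map, hF]
    rfl

end CycRep

theorem IsCycFunctor.exists_toFunctor_eq {m n : ℕ}
    {Φ : Paths (CircVert m) ⥤ Paths (CircVert n)} (hΦ : IsCycFunctor Φ) :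
    ∃ F : CycRep m n, F.toFunctor = Φ := by
  obtain ⟨f, hf₀, hf⟩ := Int.exists_add_one_eq_add
    (fun x => (plen (Φ.map (genHom m x)) : ℤ)) (ZMod.val (n := n + 1) (Φ.obj (vtx 0)) : ℤ)
  have hlen : ∀ x : ℤ, (plen (Φ.map (genHom m x)) : ℤ) = f (x + 1) - f x := fun x => by
    rw [hf, add_sub_cancel_left]
  have hper : ∀ x : ℤ, f (x + (m + 1 : ℤ)) = f x + (n + 1 : ℤ) := fun x => by
    have h := CircVert.plen_map_cycleW_eq_sub Φ f hlen x
    have hn : plen (cycleW n (Φ.obj (vtx x))) = n + 1 := CircVert.plen_cycleW _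
    rw [hΦ, hn] at h
    push_cast at h
    linarith
  let F : CycRep m n := ⟨f, monotone_int_of_le_succ fun x => by simp [hf], hper⟩
  refine ⟨F, CircVert.functor_ext_of_plen _ ?_ fun i => ?_⟩
  · rw [← Int.cast_zero, F.toFunctor_obj]
    change vtx ((f 0 : ℤ) : CircVert n) = _
    rw [hf₀, Int.cast_natCast]
    exact ZMod.natCast_zmod_val _
  · obtain ⟨x, rfl⟩ := ZMod.intCast_surjective i
    exact_mod_cast (F.plen_toFunctor_map_genHom x).trans (hlen x).symm

noncomputable def lambdaFunctorEquiv (m n : ℕ) : Quotient (cycSetoid m n) ≃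
    {Φ : Paths (CircVert m) ⥤ Paths (CircVert n) // IsCycFunctor Φ} :=
  Equiv.ofBijective
    (Quotient.lift (fun F => ⟨F.toFunctor, F.isCycFunctor_toFunctor⟩) fun _ _ h =>
      Subtype.ext (CycRep.toFunctor_eq_of_rel h))
    ⟨fun x y => Quotient.inductionOn₂ x y fun _ _ h =>
        Quotient.sound (CycRep.rel_of_toFunctor_eq (congrArg Subtype.val h)),
      fun ⟨_, hΦ⟩ =>
        let ⟨F, hF⟩ := hΦ.exists_toFunctor_eq
        ⟨Quotient.mk _ F, Subtype.ext hF⟩⟩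

/-- For `m, n ≥ 0`, the set of `Λ`-functors `𝒬^m → 𝒬^n` is in bijection with
the set of nondecreasing functions `F : ℤ → ℤ` satisfying `F(x + m + 1) = F(x) + (n + 1)`, taken
modulo the equivalence relation `F ∼ F + (n + 1)`.  The bijection sends the class of `F` to the
`Λ`-functor mapping the vertex `i mod (m+1)` to `F(i) mod (n+1)` and mapping the generating arrow
`i → i+1` to the unique path of length `F(i+1) − F(i)`; and these bijections are compatible with
composition.  (This identifies `Fun_Λ(𝒬^m, 𝒬^n)` with `Hom_Λ(⟨m⟩, ⟨n⟩)` in Connes' cyclic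
category, so that `⟨n⟩ ↦ 𝒬^n` is a fully faithful embedding of the cyclic category into
`Λ`-categories.) -/
theorem cyclicCategory_lambdaFunctors :
    ∃ e : ∀ m n : ℕ, Quotient (cycSetoid m n) ≃
        {F : Paths (CircVert m) ⥤ Paths (CircVert n) // IsCycFunctor F},
      (∀ (m n : ℕ) (F : CycRep m n) (x : ℤ),
        (e m n (Quotient.mk (cycSetoid m n) F)).val.obj (vtx ((x : ZMod (m + 1))))
          = vtx ((F.val x : ZMod (n + 1)))) ∧
      (∀ (m n : ℕ) (F : CycRep m n) (x : ℤ),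
        plen ((e m n (Quotient.mk (cycSetoid m n) F)).val.map (genHomZ m x))
          = (F.val (x + 1) - F.val x).toNat) ∧
      (∀ (p m n : ℕ) (G : CycRep p m) (F : CycRep m n),
        (e p n (Quotient.mk (cycSetoid p n) (F.comp G))).val
          = (e p m (Quotient.mk (cycSetoid p m) G)).val
              ⋙ (e m n (Quotient.mk (cycSetoid m n) F)).val) := by
  refine ⟨lambdaFunctorEquiv, fun _ _ F x => F.toFunctor_obj x, fun _ _ F x => ?_,
    fun _ _ _ G F => F.toFunctor_comp G⟩
  rw [CircVert.plen_map_genHomZ, ← Int.toNat_natCast (plen _)]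
  exact congrArg Int.toNat (F.plen_toFunctor_map_genHom x)
end

section
/- Fix n ≥ 0. Let 𝒬^0 denote the one-object category with endomorphism monoid (ℕ, +), with Λ-structure given by the element 1 ∈ ℕ, and let (𝒬^n)^∨ denote the category whose objects are Λ-functors 𝒬^n → 𝒬^0 and whose morphisms are natural transformations. Then the functor (𝒬^n)^op → (𝒬^n)^∨ which sends an object j ∈ ℤ/(n+1) to the Λ-functor H_j : 𝒬^n → 𝒬^0 defined on the generating arrow i → i+1 by H_j(i → i+1) = 1 ∈ ℕ if i+1 = j and H_j(i → i+1) = 0 otherwise, and which sends a morphism f : j → j' of 𝒬^n to the natural transformation H_j ⇒ H_{j'} induced by precomposition with f under the canonical identifications Hom_{𝒬^n}(j, i) ≅ ℕ (sending t + φ_{ji} to t), is an equivalence of categories. Moreover, this equivalence is a Λ-equivalence: it carries the Λ-structure of (𝒬^n)^op (given by the full-cycle endomorphisms w_j) to the Λ-structure of (𝒬^n)^∨ (given by adding 1 ∈ ℕ to every component of a natural transformation). -/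
open CategoryTheory

/-- The dual `Λ`-category `(𝒬ⁿ)^∨`: the category of `Λ`-functors `𝒬ⁿ → 𝒬⁰` with natural
transformations as morphisms. -/
abbrev CycDual (n : ℕ) :=
  CategoryTheory.ObjectProperty.FullSubcategory
    (fun F : Paths (CircVert n) ⥤ Paths (CircVert 0) => IsCycFunctor F)

/-!
In `𝒬ⁿ` a path is determined by its source and its length, and its length is congruent to
target minus source modulo `n + 1`; a morphism of `𝒬⁰` is just a natural number. So `H_j` sends
a path from `x` to the number of times it arrives at `j`, namely `⌊((x - j).val + length)/(n+1)⌋`,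
and every construction reduces to arithmetic of this quotient. A natural transformation
`H_j ⇒ H_{j'}` is determined by its component at `j`, by naturality along the shortest path from
`j` to any `i`; this gives full faithfulness. A `Λ`-functor `𝒬ⁿ → 𝒬⁰` assigns to the `n + 1`
arrows of the cycle lengths summing to `1`, so exactly one arrow `i → i + 1` has length `1`, and
the functor is `H_{i+1}`.
-/

section Turns

variable {m : ℕ}

/-- The number of times a walk of length `ℓ` around `ℤ/(m+1)` started at `x` arrives at `0`. -/
def turns (x : ZMod (m + 1)) (ℓ : ℕ) : ℕ := (x.val + ℓ) / (m + 1)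

theorem turns_eq {x y : ZMod (m + 1)} {ℓ t : ℕ} (h : (m + 1) * t + y.val = x.val + ℓ) :
    turns x ℓ = t := by
  rw [turns, ← h, Nat.mul_add_div (Nat.succ_pos m), Nat.div_eq_of_lt (ZMod.val_lt y), add_zero]

theorem mul_turns_add_val {x y : ZMod (m + 1)} {ℓ : ℕ} (h : (ℓ : ZMod (m + 1)) = y - x) :
    (m + 1) * turns x ℓ + y.val = x.val + ℓ := by
  have hmod : (x.val + ℓ) % (m + 1) = y.val := by
    rw [← ZMod.val_natCast, Nat.cast_add, ZMod.natCast_zmod_val, h, add_sub_cancel]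
  rw [turns, ← hmod, Nat.div_add_mod]

theorem turns_add {x y : ZMod (m + 1)} {ℓ₁ : ℕ} (h : (ℓ₁ : ZMod (m + 1)) = y - x) (ℓ₂ : ℕ) :
    turns x (ℓ₁ + ℓ₂) = turns x ℓ₁ + turns y ℓ₂ := by
  rw [turns, ← add_assoc, ← mul_turns_add_val h, add_assoc, Nat.mul_add_div (Nat.succ_pos m)]
  rfl

end Turns

theorem Finset.exists_eq_one_of_sum_eq_one {ι : Type*} {s : Finset ι} {f : ι → ℕ}
    (h : ∑ i ∈ s, f i = 1) : ∃ a ∈ s, f a = 1 ∧ ∀ b ∈ s, b ≠ a → f b = 0 := by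
  classical
  obtain ⟨a, ha, hfa⟩ := Finset.exists_ne_zero_of_sum_ne_zero (h ▸ one_ne_zero)
  rw [← Finset.add_sum_erase s f ha] at h
  refine ⟨a, ha, by omega, fun b hb hba => ?_⟩
  exact Finset.sum_eq_zero_iff.1 (by omega) b (Finset.mem_erase.2 ⟨hba, hb⟩)

theorem Quiver.Path.length_cast_s2 {V : Type*} [Quiver V] {a a' b b' : V} (ha : a = a')
    (hb : b = b') (p : Quiver.Path a b) : (p.cast ha hb).length = p.length := by
  subst ha hb
  rfl

theorem plen_id_s2 {V : Type*} [Quiver V] (x : Paths V) : plen (𝟙 x) = 0 := rfl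

theorem plen_eqToHom_s2 {V : Type*} [Quiver V] {x y : Paths V} (h : x = y) :
    plen (eqToHom h) = 0 := by
  subst h
  rfl

theorem plen_map_cast {V W : Type*} [Quiver V] [Quiver W] (F : Paths V ⥤ Paths W)
    {x x' y y' : V} (hx : x = x') (hy : y = y') (p : Quiver.Path x y) :
    plen (F.map (p.cast hx hy)) = plen (F.map p) := by
  subst hx hy
  rfl

theorem plen_comp_s2 {V : Type*} [Quiver V] {x y z : Paths V} (f : x ⟶ y) (g : y ⟶ z) :
    plen (f ≫ g) = plen f + plen g :=
  Quiver.Path.length_comp f g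

section Circle

variable {m : ℕ}

theorem length_arc (i : CircVert m) (k : ℕ) : (arc m i k).length = k := by
  induction k with
  | zero => simp [arc, Quiver.Path.length_cast_s2]
  | succ k ih => simp [arc, ih]

theorem plen_cycleW (i : CircVert m) : plen (cycleW m i) = m + 1 := by
  simp [cycleW, plen, Quiver.Path.length_cast_s2, length_arc]

theorem plen_shortPath (i j : CircVert m) : plen (shortPath m i j) = (j - i).val := by
  simp [shortPath, plen, Quiver.Path.length_cast_s2, length_arc]

theorem natCast_length {x y : CircVert m} (p : Quiver.Path x y) :
    (p.length : ZMod (m + 1)) = y - x := by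
  induction p with
  | nil => simp
  | cons p e ih =>
    obtain ⟨rfl⟩ := e
    rw [Quiver.Path.length_cons, Nat.cast_succ, ih]
    ring

theorem eq_and_heq_of_length_eq {i j j' : CircVert m} (p : Quiver.Path i j)
    (q : Quiver.Path i j') (h : p.length = q.length) : j = j' ∧ HEq p q := by
  induction p generalizing j' q with
  | nil =>
    cases q with
    | nil => exact ⟨rfl, .rfl⟩
    | cons => simp at h
  | cons p e ih =>
    cases q with
    | nil => simp at h
    | cons q e' =>
      obtain ⟨rfl, hpq⟩ := ih q (by simpa using h)
      cases hpq
      obtain ⟨rfl⟩ := e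
      obtain ⟨rfl⟩ := e'
      exact ⟨rfl, .rfl⟩

theorem hom_ext_of_plen_eq {x y : Paths (CircVert m)} {f g : x ⟶ y} (h : plen f = plen g) :
    f = g :=
  eq_of_heq (eq_and_heq_of_length_eq f g h).2

def homOfLength (x y : CircVert m) (ℓ : ℕ) (h : (ℓ : ZMod (m + 1)) = y - x) : vtx x ⟶ vtx y :=
  (arc m x ℓ).cast rfl (by rw [h]; ring)

theorem plen_homOfLength (x y : CircVert m) (ℓ : ℕ) (h : (ℓ : ZMod (m + 1)) = y - x) :
    plen (homOfLength x y ℓ h) = ℓ := by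
  simp [homOfLength, plen, Quiver.Path.length_cast_s2, length_arc]

/-- The number of times a path arrives at the vertex `j`. -/
def passes (j : CircVert m) {x y : CircVert m} (p : Quiver.Path x y) : ℕ :=
  turns (x - j) p.length

theorem mul_passes_add_val (j : CircVert m) {x y : CircVert m} (p : Quiver.Path x y) :
    (m + 1) * passes j p + (y - j).val = (x - j).val + p.length :=
  mul_turns_add_val (by rw [natCast_length]; ring)

theorem passes_comp (j : CircVert m) {x y z : CircVert m} (p : Quiver.Path x y)
    (q : Quiver.Path y z) : passes j (p.comp q) = passes j p + passes j q := by
  rw [passes, Quiver.Path.length_comp, turns_add (y := y - j) (by rw [natCast_length]; ring)]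
  rfl

theorem passes_cycleW (j i : CircVert m) : passes j (cycleW m i) = 1 :=
  turns_eq (y := i - j) (by rw [show (cycleW m i).length = m + 1 from plen_cycleW i]; ring)

theorem passes_shortPath_self (j i : CircVert m) : passes j (shortPath m j i) = 0 :=
  turns_eq (y := i - j) (by rw [show (shortPath m j i).length = (i - j).val from
    plen_shortPath j i, sub_self, ZMod.val_zero]; ring)

theorem passes_nil (j x : CircVert m) : passes j (Quiver.Path.nil : Quiver.Path x x) = 0 :=
  turns_eq (y := x - j) (by simp)

theorem passes_toPath (j : CircVert m) {a b : CircVert m} (e : a ⟶ b) :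
    passes j e.toPath = if a + 1 = j then 1 else 0 := by
  have hb : b = a + 1 := e.down
  have key : (m + 1) * passes j e.toPath + (b - j).val = (a - j).val + 1 :=
    mul_turns_add_val (by simp [hb])
  have hlt := ZMod.val_lt (a - j)
  have hzero : (b - j).val = 0 ↔ a + 1 = j := by rw [ZMod.val_eq_zero, sub_eq_zero, hb]
  generalize passes j e.toPath = c at key ⊢
  have hle : c ≤ 1 := by nlinarith
  interval_cases c
  · rw [if_neg (fun h => by have := hzero.2 h; omega)]
  · rw [if_pos (hzero.1 (by omega))]

end Circle

instance : Subsingleton (CircVert 0) :=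
  inferInstanceAs (Subsingleton (Fin 1))

instance : Subsingleton (Paths (CircVert 0)) :=
  inferInstanceAs (Subsingleton (Fin 1))

def homOfLength₀ (x y : Paths (CircVert 0)) (ℓ : ℕ) : x ⟶ y :=
  homOfLength x y ℓ (Subsingleton.elim _ _)

theorem plen_homOfLength₀ (x y : Paths (CircVert 0)) (ℓ : ℕ) : plen (homOfLength₀ x y ℓ) = ℓ :=
  plen_homOfLength (m := 0) x y ℓ _

section Duality

variable {n : ℕ}

/-- The `Λ`-functor `H_j : 𝒬ⁿ ⥤ 𝒬⁰`. -/
def dualObj (j : CircVert n) : Paths (CircVert n) ⥤ Paths (CircVert 0) where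
  obj _ := vtx 0
  map p := homOfLength₀ _ _ (passes j p)
  map_id x := hom_ext_of_plen_eq (by rw [plen_homOfLength₀]; exact passes_nil j x)
  map_comp f g := hom_ext_of_plen_eq (by
    rw [plen_comp_s2, plen_homOfLength₀, plen_homOfLength₀, plen_homOfLength₀]
    exact passes_comp j f g)

theorem plen_dualObj_map (j : CircVert n) {x y : Paths (CircVert n)} (p : x ⟶ y) :
    plen ((dualObj j).map p) = passes j p :=
  plen_homOfLength₀ _ _ _

theorem dualObj_isCycFunctor (j : CircVert n) : IsCycFunctor (dualObj j) := fun i =>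
  hom_ext_of_plen_eq ((plen_dualObj_map j _).trans
    ((passes_cycleW j i).trans (plen_cycleW (m := 0) _).symm))

theorem natCast_plen {x y : CircVert n} (f : vtx x ⟶ vtx y) :
    (plen f : ZMod (n + 1)) = y - x :=
  natCast_length f

theorem passes_add_turns {j j' : CircVert n} {ℓ : ℕ} (hℓ : (ℓ : ZMod (n + 1)) = j - j')
    {x y : CircVert n} (p : Quiver.Path x y) :
    passes j p + turns (y - j) ℓ = turns (x - j) ℓ + passes j' p := by
  rw [passes, passes, ← turns_add (by rw [natCast_length]; ring), add_comm p.length,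
    turns_add (y := x - j') (by rw [hℓ]; ring)]

/-- The natural transformation `H_j ⟶ H_{j'}` induced by precomposition with `f`: its component
at `i` is the `t` with `w_i ^ t ∘ φ_{j' i} = φ_{j i} ∘ f`. -/
def dualMap {j j' : CircVert n} (f : vtx j' ⟶ vtx j) : dualObj j ⟶ dualObj j' where
  app (i : CircVert n) := homOfLength₀ _ _ (turns (i - j) (plen f))
  naturality x y p := hom_ext_of_plen_eq (by
    simp only [plen_comp_s2, plen_dualObj_map, plen_homOfLength₀]
    exact passes_add_turns (natCast_plen f) p)

theorem plen_dualMap_app {j j' : CircVert n} (f : vtx j' ⟶ vtx j) (i : CircVert n) :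
    plen ((dualMap f).app (vtx i)) = turns (i - j) (plen f) :=
  plen_homOfLength₀ _ _ _

theorem plen_eq_of_dualMap {j j' : CircVert n} (f : vtx j' ⟶ vtx j) :
    plen f = (n + 1) * plen ((dualMap f).app (vtx j)) + (j - j').val := by
  rw [plen_dualMap_app, mul_turns_add_val (y := j - j') (by rw [natCast_plen]; ring), sub_self,
    ZMod.val_zero, zero_add]

theorem plen_dualMap_app_mul_add {j j' : CircVert n} (f : vtx j' ⟶ vtx j) (i : CircVert n) :
    plen ((dualMap f).app (vtx i)) * (n + 1) + plen (shortPath n j' i)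
      = plen f + plen (shortPath n j i) := by
  rw [plen_dualMap_app, plen_shortPath, plen_shortPath, mul_comm, add_comm (plen f),
    mul_turns_add_val (by rw [natCast_plen]; ring)]

theorem dualMap_cycleW_app (j i : CircVert n) :
    (dualMap (cycleW n j)).app (vtx i) = cycleW 0 ((dualObj j).obj (vtx i)) :=
  hom_ext_of_plen_eq ((plen_dualMap_app _ i).trans
    ((turns_eq (y := i - j) (by rw [plen_cycleW]; ring)).trans
      (plen_cycleW (m := 0) _).symm))

theorem dualMap_eq {j j' : CircVert n} (f : vtx j' ⟶ vtx j) (α : dualObj j ⟶ dualObj j')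
    (h : ∀ i : CircVert n, turns (i - j) (plen f) = plen (α.app (vtx i))) : dualMap f = α := by
  ext i
  exact hom_ext_of_plen_eq ((plen_dualMap_app f i).trans (h i))

theorem dualMap_id (j : CircVert n) : dualMap (𝟙 (vtx j)) = 𝟙 (dualObj j) :=
  dualMap_eq _ _ fun i => turns_eq (y := i - j) (by simp [plen_id_s2])

theorem dualMap_comp {j j' j'' : CircVert n} (f : vtx j'' ⟶ vtx j') (g : vtx j' ⟶ vtx j) :
    dualMap (f ≫ g) = dualMap g ≫ dualMap f :=
  dualMap_eq _ _ fun i => by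
    rw [NatTrans.comp_app, plen_comp_s2, plen_comp_s2, plen_dualMap_app, plen_dualMap_app,
      add_comm (plen f), turns_add (y := i - j') (by rw [natCast_plen]; ring)]

variable (n) in
def duality : (Paths (CircVert n))ᵒᵖ ⥤ CycDual n where
  obj X := ⟨dualObj X.unop, dualObj_isCycFunctor X.unop⟩
  map f := ObjectProperty.homMk (dualMap f.unop)
  map_id X := ObjectProperty.hom_ext _ (dualMap_id X.unop)
  map_comp f g := ObjectProperty.hom_ext _ (dualMap_comp g.unop f.unop)

theorem dualMap_injective {j j' : CircVert n} :
    Function.Injective (dualMap : (vtx j' ⟶ vtx j) → (dualObj j ⟶ dualObj j')) :=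
  fun f g h => hom_ext_of_plen_eq (by rw [plen_eq_of_dualMap f, plen_eq_of_dualMap g, h])

theorem dualMap_surjective {j j' : CircVert n} :
    Function.Surjective (dualMap : (vtx j' ⟶ vtx j) → (dualObj j ⟶ dualObj j')) := by
  intro α
  have hℓ : (((n + 1) * plen (α.app (vtx j)) + (j - j').val : ℕ) : ZMod (n + 1)) = j - j' := by
    simp
  refine ⟨homOfLength j' j _ hℓ, dualMap_eq _ _ fun i => turns_eq (y := i - j') ?_⟩
  have hnat := congrArg plen (α.naturality (shortPath n j i))
  rw [plen_comp_s2, plen_comp_s2, plen_dualObj_map, plen_dualObj_map, passes_shortPath_self,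
    zero_add] at hnat
  have hj' := mul_passes_add_val j' (shortPath n j i)
  rw [show (shortPath n j i).length = (i - j).val from plen_shortPath j i] at hj'
  rw [plen_homOfLength, hnat, mul_add]
  linarith

theorem plen_map_toPath (F : Paths (CircVert n) ⥤ Paths (CircVert 0)) {a b : CircVert n}
    (e : a ⟶ b) : plen (F.map e.toPath) = plen (F.map (genHom n a)) := by
  obtain ⟨rfl⟩ := e
  rfl

theorem plen_map_arc (F : Paths (CircVert n) ⥤ Paths (CircVert 0)) (x : CircVert n) (k : ℕ) :
    plen (F.map (arc n x k)) = ∑ t ∈ Finset.range k, plen (F.map (genHom n (x + t))) := by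
  induction k with
  | zero =>
    rw [arc, plen_map_cast, Finset.sum_range_zero]
    exact congrArg plen (F.map_id (vtx x))
  | succ k ih =>
    let e : x + (k : ZMod (n + 1)) ⟶ x + ((k + 1 : ℕ) : ZMod (n + 1)) := ⟨by push_cast; ring⟩
    rw [Finset.sum_range_succ, ← ih, ← plen_map_toPath F e, ← plen_comp_s2]
    exact congrArg plen (F.map_comp (arc n x k : vtx x ⟶ vtx (x + k)) e.toPath)

theorem exists_plen_map_genHom_eq {F : Paths (CircVert n) ⥤ Paths (CircVert 0)}
    (hF : IsCycFunctor F) :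
    ∃ j : CircVert n, ∀ i, plen (F.map (genHom n i)) = if i + 1 = j then 1 else 0 := by
  have hsum : ∑ t ∈ Finset.range (n + 1), plen (F.map (genHom n t)) = 1 := by
    have h := (congrArg plen (hF 0)).trans (plen_cycleW (m := 0) _)
    rw [cycleW, plen_map_cast, plen_map_arc] at h
    refine (Finset.sum_congr rfl fun t _ => ?_).trans h
    exact congrArg (fun i => plen (F.map (genHom n i))) (zero_add (t : CircVert n)).symm
  obtain ⟨t₀, -, hone, hzero⟩ := Finset.exists_eq_one_of_sum_eq_one hsum
  refine ⟨t₀ + 1, fun i => ?_⟩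
  obtain ⟨t, ht, rfl⟩ : ∃ t < n + 1, (t : ZMod (n + 1)) = i :=
    ⟨i.val, ZMod.val_lt i, ZMod.natCast_zmod_val i⟩
  split_ifs with h
  · rw [(add_left_inj 1).1 h, hone]
  · exact hzero t (Finset.mem_range.2 ht) (fun h' => h (by rw [h']))

theorem eq_dualObj_of_plen_map_genHom {F : Paths (CircVert n) ⥤ Paths (CircVert 0)}
    {j : CircVert n} (h : ∀ i, plen (F.map (genHom n i)) = if i + 1 = j then 1 else 0) :
    F = dualObj j := by
  refine Paths.ext_functor (funext fun _ => Subsingleton.elim _ _) fun a b e =>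
    hom_ext_of_plen_eq ?_
  rw [plen_comp_s2, plen_comp_s2, plen_eqToHom_s2, plen_eqToHom_s2, zero_add, add_zero, plen_map_toPath, h]
  exact ((plen_dualObj_map j e.toPath).trans (passes_toPath j e)).symm

instance : (duality n).Faithful where
  map_injective h := Quiver.Hom.unop_inj (dualMap_injective (congrArg (·.hom) h))

instance : (duality n).Full where
  map_surjective α := by
    obtain ⟨f, hf⟩ := dualMap_surjective α.hom
    exact ⟨f.op, ObjectProperty.hom_ext _ hf⟩

instance : (duality n).EssSurj where
  mem_essImage F := by
    obtain ⟨F, hF⟩ := F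
    obtain ⟨j, hj⟩ := exists_plen_map_genHom_eq hF
    obtain rfl := eq_dualObj_of_plen_map_genHom hj
    exact ⟨Opposite.op (vtx j), ⟨Iso.refl _⟩⟩

end Duality

/-- The functor `(𝒬ⁿ)ᵒᵖ → (𝒬ⁿ)^∨` sending `j` to the `Λ`-functor `H_j`
(defined on the generating arrow `i → i+1` by `1 ∈ ℕ` if `i + 1 = j` and `0` otherwise) and
sending `f : j' → j` to the natural transformation `H_j ⇒ H_{j'}` induced by precomposition with
`f` under the identifications `Hom(j, i) ≅ ℕ` (so that the component at `i` is the natural number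
`t` with `t(n+1) + length φ_{j'i} = length f + length φ_{ji}`), is an equivalence of categories;
moreover it is a `Λ`-equivalence, carrying the full-cycle endomorphisms `w_j` of `(𝒬ⁿ)ᵒᵖ` to the
`Λ`-structure of `(𝒬ⁿ)^∨` (adding `1 ∈ ℕ`, i.e. one loop, to every component). -/
theorem cyclic_duality (n : ℕ) :
    ∃ e : (Paths (CircVert n))ᵒᵖ ≌ CycDual n,
      -- on objects: `j ↦ H_j`
      (∀ (j i : CircVert n),
        plen ((e.functor.obj (Opposite.op (vtx j))).obj.map (genHom n i))
          = if i + 1 = j then 1 else 0) ∧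
      -- on morphisms: precomposition under the identifications `Hom(j, i) ≅ ℕ`
      (∀ (j j' : CircVert n) (f : vtx j' ⟶ vtx j) (i : CircVert n),
        plen ((e.functor.map f.op).hom.app (vtx i)) * (n + 1) + plen (shortPath n j' i)
          = plen f + plen (shortPath n j i)) ∧
      -- the equivalence is a `Λ`-equivalence
      (∀ (j i : CircVert n),
        (e.functor.map (cycleW n j).op).hom.app (vtx i)
          = cycleW 0 ((e.functor.obj (Opposite.op (vtx j))).obj.obj (vtx i))) := by
  have : (duality n).IsEquivalence := {}
  refine ⟨(duality n).asEquivalence, fun j i => ?_, fun j j' f i => ?_, fun j i => ?_⟩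
  · exact (plen_dualObj_map j (genHom n i)).trans (passes_toPath j _)
  · exact plen_dualMap_app_mul_add f i
  · exact dualMap_cycleW_app j i
end

section
/- Let C be a small category and let n, m ≥ 1. Let Φ be the map from NC_{n+m}(C) to NC_n(C) × NC_{m+1}(C) sending a cyclic (n+m)-chain (x_0, …, x_{n+m}; f_0, …, f_{n+m}) to the pair consisting of (i) the cyclic n-chain with objects x_0, …, x_n, morphisms f_0, …, f_{n−1}, and return morphism f_{n+m} ∘ f_{n+m−1} ∘ ⋯ ∘ f_n : x_n → x_0, and (ii) the cyclic (m+1)-chain with objects x_0, x_n, x_{n+1}, …, x_{n+m}, first morphism f_{n−1} ∘ ⋯ ∘ f_0 : x_0 → x_n, followed by f_n, …, f_{n+m−1}, and return morphism f_{n+m} : x_{n+m} → x_0. Then Φ is injective, and its image consists exactly of the pairs of a cyclic n-chain (y_0, …, y_n; g_0, …, g_n) and a cyclic (m+1)-chain (z_0, …, z_{m+1}; h_0, …, h_{m+1}) such that y_0 = z_0, y_n = z_1, g_{n−1} ∘ ⋯ ∘ g_0 = h_0, and g_n = h_{m+1} ∘ h_m ∘ ⋯ ∘ h_1. (This is the 2-Segal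 map of the cyclic nerve of C associated with the subdivision of the (n+m+1)-gon with vertices 0, …, n+m along the diagonal {0, n}; its bijectivity onto the fiber product is the elementary case of the proposition that the cyclic nerve of a small category is a 2-Segal cyclic set.) -/
open CategoryTheory

universe v u

/-- A cyclic `n`-chain in a category `C`: objects `x_0, …, x_n`, morphisms
`f_k : x_k → x_{k+1}` for `0 ≤ k < n`, and a return morphism `f_n : x_n → x_0`.
This is the `n`-th component of the cyclic nerve of `C`. -/
structure CyclicChain (C : Type u) [Category.{v} C] (n : ℕ) where
  obj : ∀ k : ℕ, k ≤ n → C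
  map : ∀ k : ℕ, (h : k < n) → (obj k h.le ⟶ obj (k + 1) h)
  ret : obj n le_rfl ⟶ obj 0 (Nat.zero_le n)

namespace CyclicChain

variable {C : Type u} [Category.{v} C] {n : ℕ}

theorem obj_congr (c : CyclicChain C n) {a b : ℕ} (h : a = b) (ha : a ≤ n) (hb : b ≤ n) :
    c.obj a ha = c.obj b hb := by subst h; rfl

/-- The composite `f_{b-1} ∘ ⋯ ∘ f_a : x_a → x_b` of consecutive morphisms of a chain
(the identity when `a = b`). -/
def comp (c : CyclicChain C n) : ∀ (a b : ℕ) (hab : a ≤ b) (hb : b ≤ n),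
    (c.obj a (by omega) ⟶ c.obj b hb)
  | a, 0, hab, hb => eqToHom (c.obj_congr (Nat.le_zero.mp hab) _ _)
  | a, b + 1, hab, hb =>
    if h : a = b + 1 then eqToHom (c.obj_congr h _ _)
    else c.comp a b (by omega) (by omega) ≫ c.map b (by omega)

end CyclicChain

variable {C : Type u} [Category.{v} C]

/-- The `2`-Segal map of the cyclic nerve associated with the subdivision of the
`(n+m+1)`-gon with vertices `0, …, n+m` along the diagonal `{0, n}`: it sends a cyclic
`(n+m)`-chain to (i) the cyclic `n`-chain `(x_0, …, x_n; f_0, …, f_{n-1},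
f_{n+m} ∘ ⋯ ∘ f_n)` and (ii) the cyclic `(m+1)`-chain
`(x_0, x_n, …, x_{n+m}; f_{n-1} ∘ ⋯ ∘ f_0, f_n, …, f_{n+m-1}, f_{n+m})`. -/
def cyclicSegalMap (n m : ℕ) (c : CyclicChain C (n + m)) :
    CyclicChain C n × CyclicChain C (m + 1) :=
  (⟨fun k h => c.obj k (by omega),
    fun k h => c.map k (by omega),
    c.comp n (n + m) (by omega) le_rfl ≫ c.ret⟩,
   ⟨fun k hk => match k, hk with
      | 0, _ => c.obj 0 (by omega)
      | j + 1, hk => c.obj (n + j) (by omega),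
    fun k hk => match k, hk with
      | 0, _ => c.comp 0 n (by omega) (by omega)
      | j + 1, hk => c.map (n + j) (by omega),
    c.ret⟩)


/-! `Φ` has an explicit inverse on the fiber product: glue a cyclic `n`-chain `y` and a cyclic
`(m+1)`-chain `z` with `y_0 = z_0`, `y_n = z_1` into the cyclic `(n+m)`-chain
`(y_0, …, y_n = z_1, z_2, …, z_{m+1}; g_0, …, g_{n-1}, h_1, …, h_{m+1})`. Gluing the two
components of `Φ c` gives back `c`, and `Φ` of the glued chain is `(y, z)` exactly when the
two composites in the statement match. All composites involved are compared through one
observation: `f_{b-1} ∘ ⋯ ∘ f_a` only depends on the objects and morphisms between `a` and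
`b`, so chains agreeing along index intervals of the same length have the same composite over
them. -/

namespace CyclicChain

variable {N N' : ℕ}

@[simp]
theorem comp_self (c : CyclicChain C N) (a : ℕ) (haa : a ≤ a) (ha : a ≤ N) :
    c.comp a a haa ha = 𝟙 _ := by
  cases a <;> simp [comp]

theorem comp_succ (c : CyclicChain C N) {a b : ℕ} (hab : a ≤ b) (hb : b < N) :
    c.comp a (b + 1) (by omega) hb = c.comp a b hab hb.le ≫ c.map b hb := by
  rw [comp, dif_neg (by omega)]

theorem map_congr (c : CyclicChain C N) {k k' : ℕ} (h : k = k') (hk : k < N) (hk' : k' < N) :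
    c.map k hk = eqToHom (c.obj_congr h _ _) ≫ c.map k' hk' ≫
      eqToHom (c.obj_congr (by omega) _ _) := by
  subst h
  simp

theorem ext {c d : CyclicChain C N} (hobj : ∀ k (hk : k ≤ N), c.obj k hk = d.obj k hk)
    (hmap : ∀ k (hk : k < N),
      c.map k hk = eqToHom (hobj k hk.le) ≫ d.map k hk ≫ eqToHom (hobj (k + 1) hk).symm)
    (hret : c.ret = eqToHom (hobj N le_rfl) ≫ d.ret ≫ eqToHom (hobj 0 (Nat.zero_le N)).symm) :
    c = d := by
  obtain ⟨obj, map, ret⟩ := c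
  obtain ⟨obj', map', ret'⟩ := d
  obtain rfl : obj = obj' := funext₂ hobj
  simp only [eqToHom_refl, Category.comp_id, Category.id_comp] at hmap hret
  congr 1
  exact funext₂ hmap

theorem comp_eq_of_agree (c : CyclicChain C N) (d : CyclicChain C N') {a b a' b' : ℕ}
    (hab : a ≤ b) (hb : b ≤ N) (hab' : a' ≤ b') (hb' : b' ≤ N') (hlen : b + a' = b' + a)
    (hobj : ∀ k k', a ≤ k → ∀ (hkb : k ≤ b) (hkk' : k + a' = k' + a),
      c.obj k (by omega) = d.obj k' (by omega))
    (hmap : ∀ k k' (hak : a ≤ k) (hkb : k < b) (hkk' : k + a' = k' + a),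
      c.map k (by omega) = eqToHom (hobj k k' hak hkb.le hkk') ≫ d.map k' (by omega) ≫
        eqToHom (hobj (k + 1) (k' + 1) (by omega) hkb (by omega)).symm) :
    c.comp a b hab hb = eqToHom (hobj a a' le_rfl hab (by omega)) ≫ d.comp a' b' hab' hb' ≫
      eqToHom (hobj b b' hab le_rfl hlen).symm := by
  induction b generalizing b' with
  | zero =>
    obtain rfl : a = 0 := by omega
    obtain rfl : a' = b' := by omega
    simp
  | succ b ih =>
    by_cases hba : a = b + 1
    · subst hba
      obtain rfl : a' = b' := by omega
      simp
    obtain ⟨b₀', rfl⟩ : ∃ b₀', b' = b₀' + 1 := ⟨b' - 1, by omega⟩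
    rw [c.comp_succ (by omega) hb, d.comp_succ (by omega) hb',
      ih (b' := b₀') (by omega) (by omega) (by omega) (by omega) (by omega)
        (fun k k' hak _ hkk' => hobj k k' hak (by omega) hkk')
        (fun k k' hak _ hkk' => hmap k k' hak (by omega) hkk'),
      hmap b b₀' (by omega) (by omega) (by omega)]
    simp

section Glue

variable {n m : ℕ} (cn : CyclicChain C n) (cm : CyclicChain C (m + 1))

def glueObj (k : ℕ) (hk : k ≤ n + m) : C :=
  if h : k ≤ n then cn.obj k h else cm.obj (k - n + 1) (by omega)

theorem glueObj_of_le {k : ℕ} (hk : k ≤ n + m) (h : k ≤ n) :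
    glueObj cn cm k hk = cn.obj k h :=
  dif_pos h

variable {cn cm}

theorem glueObj_of_ge (e1 : cn.obj n le_rfl = cm.obj 1 (Nat.le_add_left 1 m)) {k : ℕ}
    (hk : k ≤ n + m) (h : n ≤ k) : glueObj cn cm k hk = cm.obj (k - n + 1) (by omega) := by
  unfold glueObj
  split_ifs with h'
  · obtain rfl : k = n := by omega
    exact e1.trans (cm.obj_congr (by omega) _ _)
  · rfl

/-- Reducible, so that `simp` sees the objects of `glue e0 e1` as `glueObj cn cm`. -/
abbrev glue (e0 : cn.obj 0 (Nat.zero_le n) = cm.obj 0 (Nat.zero_le (m + 1)))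
    (e1 : cn.obj n le_rfl = cm.obj 1 (Nat.le_add_left 1 m)) : CyclicChain C (n + m) where
  obj := glueObj cn cm
  map k hk :=
    if h : k + 1 ≤ n then
      eqToHom (glueObj_of_le cn cm (by omega) (by omega)) ≫ cn.map k h ≫
        eqToHom (glueObj_of_le cn cm (by omega) h).symm
    else
      eqToHom (glueObj_of_ge e1 (by omega) (by omega)) ≫ cm.map (k - n + 1) (by omega) ≫
        eqToHom ((glueObj_of_ge e1 (by omega) (by omega)).trans
          (cm.obj_congr (by omega) _ _)).symm
  ret :=
    eqToHom ((glueObj_of_ge e1 le_rfl (by omega)).trans (cm.obj_congr (by omega) _ _)) ≫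
      cm.ret ≫ eqToHom ((glueObj_of_le cn cm (by omega) (Nat.zero_le n)).trans e0).symm

variable (e0 : cn.obj 0 (Nat.zero_le n) = cm.obj 0 (Nat.zero_le (m + 1)))
  (e1 : cn.obj n le_rfl = cm.obj 1 (Nat.le_add_left 1 m))

theorem glue_map_of_lt {k : ℕ} (hk : k < n + m) (h : k < n) :
    (glue e0 e1).map k hk = eqToHom (glueObj_of_le cn cm (by omega) h.le) ≫ cn.map k h ≫
      eqToHom (glueObj_of_le cn cm (by omega) h).symm :=
  dif_pos h

theorem glue_map_of_ge {k : ℕ} (hk : k < n + m) (h : n ≤ k) :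
    (glue e0 e1).map k hk =
      eqToHom (glueObj_of_ge e1 (by omega) h) ≫ cm.map (k - n + 1) (by omega) ≫
        eqToHom ((glueObj_of_ge e1 (by omega) (by omega)).trans
          (cm.obj_congr (by omega) _ _)).symm :=
  dif_neg (by omega)

theorem glue_comp_fst :
    (glue e0 e1).comp 0 n (Nat.zero_le n) (by omega) =
      eqToHom (glueObj_of_le cn cm (by omega) (Nat.zero_le n)) ≫
        cn.comp 0 n (Nat.zero_le n) le_rfl ≫
        eqToHom (glueObj_of_le cn cm (by omega) le_rfl).symm :=
  comp_eq_of_agree _ _ _ _ _ _ rfl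
    (fun k k' _ hkb hkk' => (glueObj_of_le cn cm (by omega) hkb).trans
      (cn.obj_congr (by omega) _ _))
    (fun k k' _ hkb hkk' => by
      rw [glue_map_of_lt e0 e1 _ hkb, cn.map_congr (show k = k' by omega) _ (by omega)]
      simp)

theorem glue_comp_snd :
    (glue e0 e1).comp n (n + m) (by omega) le_rfl =
      eqToHom ((glueObj_of_le cn cm (by omega) le_rfl).trans e1) ≫
        cm.comp 1 (m + 1) (Nat.le_add_left 1 m) le_rfl ≫
        eqToHom ((glueObj_of_ge e1 le_rfl (by omega)).trans (cm.obj_congr (by omega) _ _)).symm :=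
  comp_eq_of_agree _ _ _ _ _ _ (by omega)
    (fun k k' hak _ hkk' => (glueObj_of_ge e1 (by omega) hak).trans
      (cm.obj_congr (by omega) _ _))
    (fun k k' hak _ hkk' => by
      rw [glue_map_of_ge e0 e1 _ hak, cm.map_congr (show k - n + 1 = k' by omega) _ (by omega)]
      simp)

end Glue

end CyclicChain

open CyclicChain

section SegalMap

variable {n m : ℕ}

theorem cyclicSegalMap_fst_comp (c : CyclicChain C (n + m)) :
    (cyclicSegalMap n m c).1.comp 0 n (Nat.zero_le n) le_rfl =
      c.comp 0 n (Nat.zero_le n) (by omega) :=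
  (comp_eq_of_agree (cyclicSegalMap n m c).1 c (Nat.zero_le n) le_rfl (Nat.zero_le n) (by omega)
    rfl (fun k k' _ _ hkk' => c.obj_congr (by omega) _ _)
    (fun k k' _ _ hkk' => c.map_congr (by omega) _ _)).trans (by simp [cyclicSegalMap])

theorem cyclicSegalMap_snd_comp (c : CyclicChain C (n + m)) :
    (cyclicSegalMap n m c).2.comp 1 (m + 1) (Nat.le_add_left 1 m) le_rfl =
      c.comp n (n + m) (by omega) le_rfl := by
  refine (comp_eq_of_agree (cyclicSegalMap n m c).2 c (a' := n) (by omega) le_rfl (by omega)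
    le_rfl (by omega) (fun k k' hak _ hkk' => ?_) (fun k k' hak _ hkk' => ?_)).trans ?_
  · obtain ⟨j, rfl⟩ : ∃ j, k = j + 1 := ⟨k - 1, by omega⟩
    exact c.obj_congr (by omega) _ _
  · obtain ⟨j, rfl⟩ : ∃ j, k = j + 1 := ⟨k - 1, by omega⟩
    exact c.map_congr (by omega) _ _
  · simp [cyclicSegalMap]

theorem CyclicChain.glue_cyclicSegalMap (c : CyclicChain C (n + m)) :
    glue (cn := (cyclicSegalMap n m c).1) (cm := (cyclicSegalMap n m c).2) rfl rfl = c := by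
  refine ext (fun k hk => ?_) (fun k hk => ?_) rfl
  · show glueObj _ _ k hk = _
    unfold glueObj
    split_ifs
    · rfl
    · exact c.obj_congr (by omega) _ _
  · rcases Nat.lt_or_ge k n with h | h
    · exact glue_map_of_lt _ _ _ h
    · refine (glue_map_of_ge _ _ _ h).trans ?_
      rw [c.map_congr (show k = n + (k - n) by omega) _ (by omega)]
      simp only [Category.assoc, eqToHom_trans, eqToHom_trans_assoc]
      rfl

variable {cn : CyclicChain C n} {cm : CyclicChain C (m + 1)}
  (e0 : cn.obj 0 (Nat.zero_le n) = cm.obj 0 (Nat.zero_le (m + 1)))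
  (e1 : cn.obj n le_rfl = cm.obj 1 (Nat.le_add_left 1 m))

theorem cyclicSegalMap_glue_fst (hret : cn.ret =
    eqToHom e1 ≫ cm.comp 1 (m + 1) (Nat.le_add_left 1 m) le_rfl ≫ cm.ret ≫ eqToHom e0.symm) :
    (cyclicSegalMap n m (glue e0 e1)).1 = cn := by
  refine ext (fun k hk => glueObj_of_le cn cm (by omega) hk)
    (fun k hk => glue_map_of_lt e0 e1 _ hk) ?_
  have hret_glue : (glue e0 e1).comp n (n + m) (by omega) le_rfl ≫ (glue e0 e1).ret =
      eqToHom (glueObj_of_le cn cm (by omega) le_rfl) ≫ cn.ret ≫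
        eqToHom (glueObj_of_le cn cm (by omega) (Nat.zero_le n)).symm := by
    rw [glue_comp_snd, hret]
    simp
  exact hret_glue

theorem cyclicSegalMap_glue_snd (h0 : cn.comp 0 n (Nat.zero_le n) le_rfl =
    eqToHom e0 ≫ cm.map 0 (Nat.succ_pos m) ≫ eqToHom e1.symm) :
    (cyclicSegalMap n m (glue e0 e1)).2 = cm := by
  refine ext (fun k hk => ?_) (fun k hk => ?_) rfl
  · cases k with
    | zero => exact (glueObj_of_le cn cm (by omega) (Nat.zero_le n)).trans e0
    | succ j =>
      exact (glueObj_of_ge e1 (by omega) (by omega)).trans (cm.obj_congr (by omega) _ _)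
  · cases k with
    | zero =>
      refine (glue_comp_fst e0 e1).trans ?_
      rw [h0]
      simp only [Category.assoc, eqToHom_trans, eqToHom_trans_assoc]
      rfl
    | succ j =>
      refine (glue_map_of_ge e0 e1 _ (by omega)).trans ?_
      rw [cm.map_congr (show n + j - n + 1 = j + 1 by omega) _ (by omega)]
      simp only [Category.assoc, eqToHom_trans, eqToHom_trans_assoc]
      rfl

end SegalMap

/-- For a small category `C` and `n, m ≥ 1`, the `2`-Segal map `Φ` of the cyclic
nerve of `C` associated with the subdivision of the `(n+m+1)`-gon along the diagonal `{0, n}` is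
injective, and its image consists exactly of the pairs of a cyclic `n`-chain
`(y_•; g_•)` and a cyclic `(m+1)`-chain `(z_•; h_•)` with `y_0 = z_0`, `y_n = z_1`,
`g_{n-1} ∘ ⋯ ∘ g_0 = h_0` and `g_n = h_{m+1} ∘ ⋯ ∘ h_1`. -/
theorem cyclicNerve_twoSegal (C : Type u) [SmallCategory C] (n m : ℕ) :
    Function.Injective (cyclicSegalMap (C := C) n m) ∧
    ∀ (cn : CyclicChain C n) (cm : CyclicChain C (m + 1)),
      (cn, cm) ∈ Set.range (cyclicSegalMap (C := C) n m) ↔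
        ∃ (e0 : cn.obj 0 (Nat.zero_le n) = cm.obj 0 (Nat.zero_le (m + 1)))
          (e1 : cn.obj n le_rfl = cm.obj 1 (by omega)),
          cn.comp 0 n (Nat.zero_le n) le_rfl
              = eqToHom e0 ≫ cm.map 0 (by omega) ≫ eqToHom e1.symm ∧
          cn.ret = eqToHom e1 ≫ cm.comp 1 (m + 1) (by omega) le_rfl ≫ cm.ret
              ≫ eqToHom e0.symm := by
  refine ⟨fun c₁ c₂ h => ?_, fun cn cm => ⟨?_, ?_⟩⟩
  · rw [← glue_cyclicSegalMap c₁, ← glue_cyclicSegalMap c₂]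
    congr 1 <;> rw [h]
  · rintro ⟨c, hc⟩
    obtain ⟨rfl, rfl⟩ := Prod.ext_iff.mp hc
    refine ⟨rfl, rfl, ?_, ?_⟩
    · rw [cyclicSegalMap_fst_comp]
      show c.comp 0 n _ _ = 𝟙 _ ≫ c.comp 0 n _ _ ≫ 𝟙 _
      rw [Category.id_comp, Category.comp_id]
    · rw [cyclicSegalMap_snd_comp]
      show c.comp n (n + m) _ le_rfl ≫ c.ret = 𝟙 _ ≫ c.comp n (n + m) _ le_rfl ≫ c.ret ≫ 𝟙 _
      rw [Category.id_comp, Category.comp_id]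
  · rintro ⟨e0, e1, h0, hret⟩
    exact ⟨glue e0 e1,
      Prod.ext (cyclicSegalMap_glue_fst e0 e1 hret) (cyclicSegalMap_glue_snd e0 e1 h0)⟩
end
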